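/- The formula φ ◁ (a⊗h) = ⟨a h₍₁₎, φ₍₁₎⟩ ⟨S(h₍₂₎), φ₍₃₎⟩ φ₍₂₎ defines a right action of the mirror bicrossproduct M(H) on H*: φ ◁ (1⊗1) = φ and (φ ◁ (a⊗h)) ◁ (b⊗g) = φ ◁ ((a⊗h)·(b⊗g)) for all a, b, h, g ∈ H and φ ∈ H*, where the product of M(H) is (a⊗h)·(b⊗g) = a(h₍₁₎ b S(h₍₂₎)) ⊗ h₍₃₎g. -/

import Mathlib

/-!
Common setup for formalizing "Ribbon operators in the semidual lattice code model"
(Soglohu–Osei–Osumanu).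

`H` is a Hopf algebra over `ℂ`.  Its dual Hopf algebra `H*` is realised as
`Module.Dual ℂ H`, with evaluation pairing `⟨h, φ⟩ = φ h`.  The multiplication of
`H*` is dual to the comultiplication of `H` and the comultiplication of `H*` is
dual to the multiplication of `H`; consequently every edge operator below, given
in the paper by a Sweedler formula on `H*`, is pre-composition
(`LinearMap.dualMap`) with an explicit linear endomorphism of `H`.  For instance
`L^h₊(φ) = ⟨h, S(φ₍₁₎) φ₍₃₎⟩ φ₍₂₎` is exactly `(L^h₊ φ)(x) = Σ φ (S h₍₁₎ * x * h₍₂₎)`.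
Since the antipode is assumed involutive (`S⁻¹ = S`), occurrences of `S⁻¹` are
rendered as `S`.
-/

open TensorProduct

noncomputable section

namespace SemidualKitaev

variable {H : Type} [Ring H] [HopfAlgebra ℂ H]

/-- The antipode of `H`. -/
abbrev S : H →ₗ[ℂ] H := HopfAlgebra.antipode (R := ℂ)

/-- The comultiplication of `H`. -/
abbrev Δ : H →ₗ[ℂ] H ⊗[ℂ] H := Coalgebra.comul (R := ℂ)

/-- The counit of `H`. -/
abbrev ε : H →ₗ[ℂ] ℂ := Coalgebra.counit (R := ℂ)

/-- `sandwich (u ⊗ v) : x ↦ u * x * v`. -/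
def sandwich : H ⊗[ℂ] H →ₗ[ℂ] H →ₗ[ℂ] H :=
  TensorProduct.lift <| LinearMap.mk₂ ℂ
    (fun u v => (LinearMap.mulRight ℂ v) ∘ₗ (LinearMap.mulLeft ℂ u))
    (fun u u' v => LinearMap.ext fun x => by simp [add_mul])
    (fun c u v => LinearMap.ext fun x => by simp [smul_mul_assoc])
    (fun u v v' => LinearMap.ext fun x => by simp [mul_add])
    (fun c u v => LinearMap.ext fun x => by simp [mul_smul_comm])

@[simp] lemma sandwich_tmul (u v x : H) : sandwich (u ⊗ₜ[ℂ] v) x = u * x * v := rfl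

/-! ### Edge (triangle) operators on `H* = Module.Dual ℂ H`

Left-module versions (eq. (3.3) of the paper). -/

/-- `L^h₊(φ) = ⟨h, S(φ₍₁₎) φ₍₃₎⟩ φ₍₂₎`, i.e. `(L^h₊ φ)(x) = Σ φ (S h₍₁₎ * x * h₍₂₎)`. -/
def Lp (h : H) : Module.Dual ℂ H →ₗ[ℂ] Module.Dual ℂ H :=
  (sandwich ((TensorProduct.map S LinearMap.id) (Δ h))).dualMap

/-- `L^h₋(φ) = ⟨h, φ₍₃₎ S⁻¹(φ₍₁₎)⟩ φ₍₂₎`, i.e. `(L^h₋ φ)(x) = Σ φ (S⁻¹ h₍₂₎ * x * h₍₁₎)`,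
with `S⁻¹ = S`. -/
def Lm (h : H) : Module.Dual ℂ H →ₗ[ℂ] Module.Dual ℂ H :=
  (sandwich ((TensorProduct.map S LinearMap.id) ((TensorProduct.comm ℂ H H) (Δ h)))).dualMap

/-- `T^a₊(φ) = ⟨S a, φ₍₁₎⟩ φ₍₂₎`, i.e. `(T^a₊ φ)(x) = φ (S a * x)`. -/
def Tp (a : H) : Module.Dual ℂ H →ₗ[ℂ] Module.Dual ℂ H :=
  (LinearMap.mulLeft ℂ (S a)).dualMap

/-- `T^a₋(φ) = ⟨a, φ₍₂₎⟩ φ₍₁₎`, i.e. `(T^a₋ φ)(x) = φ (x * a)`. -/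
def Tm (a : H) : Module.Dual ℂ H →ₗ[ℂ] Module.Dual ℂ H :=
  (LinearMap.mulRight ℂ a).dualMap

/-! Right-module versions (eq. (3.14) of the paper). -/

/-- `L̃^h₊(φ) = ⟨h, S(φ₍₃₎) φ₍₁₎⟩ φ₍₂₎`, i.e. `(L̃^h₊ φ)(x) = Σ φ (h₍₂₎ * x * S h₍₁₎)`. -/
def Ltp (h : H) : Module.Dual ℂ H →ₗ[ℂ] Module.Dual ℂ H :=
  (sandwich ((TensorProduct.map LinearMap.id S) ((TensorProduct.comm ℂ H H) (Δ h)))).dualMap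

/-- `L̃^h₋(φ) = ⟨h, φ₍₁₎ S⁻¹(φ₍₃₎)⟩ φ₍₂₎`, i.e. `(L̃^h₋ φ)(x) = Σ φ (h₍₁₎ * x * S⁻¹ h₍₂₎)`,
with `S⁻¹ = S`. -/
def Ltm (h : H) : Module.Dual ℂ H →ₗ[ℂ] Module.Dual ℂ H :=
  (sandwich ((TensorProduct.map LinearMap.id S) (Δ h))).dualMap

/-- `T̃^a₊(φ) = ⟨a, φ₍₁₎⟩ φ₍₂₎`, i.e. `(T̃^a₊ φ)(x) = φ (a * x)`. -/
def Ttp (a : H) : Module.Dual ℂ H →ₗ[ℂ] Module.Dual ℂ H :=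
  (LinearMap.mulLeft ℂ a).dualMap

/-- `T̃^a₋(φ) = ⟨S⁻¹ a, φ₍₂₎⟩ φ₍₁₎`, i.e. `(T̃^a₋ φ)(x) = φ (x * S⁻¹ a)`, with `S⁻¹ = S`. -/
def Ttm (a : H) : Module.Dual ℂ H →ₗ[ℂ] Module.Dual ℂ H :=
  (LinearMap.mulRight ℂ (S a)).dualMap

/-- The antipode `S_{H*}` of the dual Hopf algebra: `S_{H*}(φ) = φ ∘ S`. -/
def Sdual : Module.Dual ℂ H →ₗ[ℂ] Module.Dual ℂ H := (S (H := H)).dualMap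

/-- The composite edge operator `M^{(a,h)}₊ = T^a₊ ∘ L^h₊`. -/
def Mp (a h : H) : Module.Dual ℂ H →ₗ[ℂ] Module.Dual ℂ H := Tp a ∘ₗ Lp h

/-- The composite edge operator `M^{(a,h)}₋ = T^a₋ ∘ L^h₋`. -/
def Mm (a h : H) : Module.Dual ℂ H →ₗ[ℂ] Module.Dual ℂ H := Tm a ∘ₗ Lm h

/-- The right action of `M(H)` on `H*` (eq. (2.10) of the paper):
`φ ◁ (a ⊗ h) = ⟨a h₍₁₎, φ₍₁₎⟩ ⟨S h₍₂₎, φ₍₃₎⟩ φ₍₂₎`,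
i.e. `(ract φ a h)(x) = Σ φ (a * h₍₁₎ * x * S h₍₂₎)`. -/
def ract (φ : Module.Dual ℂ H) (a h : H) : Module.Dual ℂ H :=
  (sandwich ((TensorProduct.map (LinearMap.mulLeft ℂ a) S) (Δ h))).dualMap φ

/-- The (convolution) multiplication of the dual Hopf algebra `H*`:
`(φ ∗ ψ)(x) = Σ φ(x₍₁₎) ψ(x₍₂₎)`. -/
def dualMul (φ ψ : Module.Dual ℂ H) : Module.Dual ℂ H :=
  (LinearMap.mul' ℂ ℂ) ∘ₗ (TensorProduct.map φ ψ) ∘ₗ Δ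

/-- The opposite multiplication `∗op` of `H*`. -/
def dualMulOp (φ ψ : Module.Dual ℂ H) : Module.Dual ℂ H := dualMul ψ φ

/-! ### Iterated comultiplications, `Δⁿ h = Σ h₍₁₎ ⊗ (h₍₂₎ ⊗ (⋯ ⊗ h₍ₙ₊₁₎))` -/

def Δ2 : H →ₗ[ℂ] H ⊗[ℂ] (H ⊗[ℂ] H) := (LinearMap.lTensor H Δ) ∘ₗ Δ
def Δ3 : H →ₗ[ℂ] H ⊗[ℂ] (H ⊗[ℂ] (H ⊗[ℂ] H)) := (LinearMap.lTensor H Δ2) ∘ₗ Δ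
def Δ4 : H →ₗ[ℂ] H ⊗[ℂ] (H ⊗[ℂ] (H ⊗[ℂ] (H ⊗[ℂ] H))) := (LinearMap.lTensor H Δ3) ∘ₗ Δ
def Δ5 : H →ₗ[ℂ] H ⊗[ℂ] (H ⊗[ℂ] (H ⊗[ℂ] (H ⊗[ℂ] (H ⊗[ℂ] H)))) :=
  (LinearMap.lTensor H Δ4) ∘ₗ Δ
def Δ6 : H →ₗ[ℂ] H ⊗[ℂ] (H ⊗[ℂ] (H ⊗[ℂ] (H ⊗[ℂ] (H ⊗[ℂ] (H ⊗[ℂ] H))))) :=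
  (LinearMap.lTensor H Δ5) ∘ₗ Δ
def Δ7 : H →ₗ[ℂ] H ⊗[ℂ] (H ⊗[ℂ] (H ⊗[ℂ] (H ⊗[ℂ] (H ⊗[ℂ] (H ⊗[ℂ] (H ⊗[ℂ] H)))))) :=
  (LinearMap.lTensor H Δ6) ∘ₗ Δ
def Δ8 : H →ₗ[ℂ]
    H ⊗[ℂ] (H ⊗[ℂ] (H ⊗[ℂ] (H ⊗[ℂ] (H ⊗[ℂ] (H ⊗[ℂ] (H ⊗[ℂ] (H ⊗[ℂ] H))))))) :=
  (LinearMap.lTensor H Δ7) ∘ₗ Δ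
def Δ9 : H →ₗ[ℂ]
    H ⊗[ℂ] (H ⊗[ℂ] (H ⊗[ℂ] (H ⊗[ℂ] (H ⊗[ℂ] (H ⊗[ℂ] (H ⊗[ℂ] (H ⊗[ℂ] (H ⊗[ℂ] H)))))))) :=
  (LinearMap.lTensor H Δ8) ∘ₗ Δ

lemma mulLeft_add (a a' : H) :
    LinearMap.mulLeft ℂ (a + a') = LinearMap.mulLeft ℂ a + LinearMap.mulLeft ℂ a' :=
  LinearMap.ext fun x => add_mul a a' x

lemma mulLeft_smul (c : ℂ) (a : H) :
    LinearMap.mulLeft ℂ (c • a) = c • LinearMap.mulLeft ℂ a :=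
  LinearMap.ext fun x => smul_mul_assoc c a x

/-! ### The mirror bicrossproduct `M(H) = H^cop ⋈ H` on the vector space `H ⊗ H` -/

/-- `(h₍₁₎ ⊗ h₍₂₎) ⊗ h₍₃₎` version of the 2-fold comultiplication. -/
def Δ2' : H →ₗ[ℂ] (H ⊗[ℂ] H) ⊗[ℂ] H := (LinearMap.rTensor H Δ) ∘ₗ Δ

/-- `mulAction2 ((u ⊗ v) ⊗ w) (b ⊗ g) = (u * b * v) ⊗ (w * g)`. -/
def mulAction2 : (H ⊗[ℂ] H) ⊗[ℂ] H →ₗ[ℂ] (H ⊗[ℂ] H) →ₗ[ℂ] (H ⊗[ℂ] H) :=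
  TensorProduct.lift <| LinearMap.mk₂ ℂ
    (fun (uv : H ⊗[ℂ] H) (w : H) =>
      TensorProduct.map (sandwich uv) (LinearMap.mulLeft ℂ w))
    (fun uv uv' w => by (try dsimp only); rw [map_add, TensorProduct.map_add_left])
    (fun c uv w => by (try dsimp only); rw [map_smul, TensorProduct.map_smul_left])
    (fun uv w w' => by (try dsimp only); rw [mulLeft_add, TensorProduct.map_add_right])
    (fun c uv w => by (try dsimp only); rw [mulLeft_smul, TensorProduct.map_smul_right])

/-- The product of the mirror bicrossproduct `M(H)`:
`μM (a ⊗ h) (b ⊗ g) = Σ (a * h₍₁₎ * b * S h₍₂₎) ⊗ (h₍₃₎ * g)`. -/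
def μM : (H ⊗[ℂ] H) →ₗ[ℂ] (H ⊗[ℂ] H) →ₗ[ℂ] (H ⊗[ℂ] H) :=
  TensorProduct.lift <| LinearMap.mk₂ ℂ
    (fun (a h : H) =>
      mulAction2 ((TensorProduct.map (TensorProduct.map (LinearMap.mulLeft ℂ a) S)
        LinearMap.id) (Δ2' h)))
    (fun a a' h => by
      try dsimp only
      rw [mulLeft_add, TensorProduct.map_add_left, TensorProduct.map_add_left,
        LinearMap.add_apply, map_add])
    (fun c a h => by
      try dsimp only
      rw [mulLeft_smul, TensorProduct.map_smul_left, TensorProduct.map_smul_left,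
        LinearMap.smul_apply, map_smul])
    (fun a h h' => by (try dsimp only); rw [map_add, map_add, map_add])
    (fun c a h => by (try dsimp only); rw [map_smul, map_smul, map_smul])

/-- The unit `1 ⊗ 1` of `M(H)`. -/
def oneM : H ⊗[ℂ] H := (1 : H) ⊗ₜ[ℂ] (1 : H)

/-- The counit of `M(H)`: `εM (a ⊗ h) = ε a * ε h`. -/
def εM : H ⊗[ℂ] H →ₗ[ℂ] ℂ :=
  (TensorProduct.lid ℂ ℂ).toLinearMap ∘ₗ TensorProduct.map ε ε

/-- Auxiliary map for the coproduct of `M(H)`: for fixed `a₁, a₂`, it sends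
`h₁ ⊗ (h₂ ⊗ (h₃ ⊗ h₄))` to `(a₂ ⊗ h₂) ⊗ ((a₁ * h₁ * S h₃) ⊗ h₄)`. -/
def deltaMAux (a₁ a₂ : H) :
    H ⊗[ℂ] (H ⊗[ℂ] (H ⊗[ℂ] H)) →ₗ[ℂ] (H ⊗[ℂ] H) ⊗[ℂ] (H ⊗[ℂ] H) :=
  (TensorProduct.map (TensorProduct.mk ℂ H H a₂) LinearMap.id) ∘ₗ
  (TensorProduct.map LinearMap.id
    (TensorProduct.map (LinearMap.mul' ℂ H) LinearMap.id)) ∘ₗ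
  (TensorProduct.map LinearMap.id (TensorProduct.assoc ℂ H H H).symm.toLinearMap) ∘ₗ
  (TensorProduct.assoc ℂ H H (H ⊗[ℂ] H)).toLinearMap ∘ₗ
  (TensorProduct.map (TensorProduct.comm ℂ H H).toLinearMap LinearMap.id) ∘ₗ
  (TensorProduct.assoc ℂ H H (H ⊗[ℂ] H)).symm.toLinearMap ∘ₗ
  (TensorProduct.map (LinearMap.mulLeft ℂ a₁)
    (TensorProduct.map LinearMap.id (TensorProduct.map S LinearMap.id)))

lemma deltaMAux_add_left (a₁ a₁' a₂ : H) :
    deltaMAux (a₁ + a₁') a₂ = deltaMAux a₁ a₂ + deltaMAux (H := H) a₁' a₂ := by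
  unfold deltaMAux
  rw [mulLeft_add, TensorProduct.map_add_left]
  simp only [LinearMap.comp_add]

lemma deltaMAux_smul_left (c : ℂ) (a₁ a₂ : H) :
    deltaMAux (c • a₁) a₂ = c • deltaMAux (H := H) a₁ a₂ := by
  unfold deltaMAux
  rw [mulLeft_smul, TensorProduct.map_smul_left]
  simp only [LinearMap.comp_smul]

lemma deltaMAux_add_right (a₁ a₂ a₂' : H) :
    deltaMAux a₁ (a₂ + a₂') = deltaMAux a₁ a₂ + deltaMAux (H := H) a₁ a₂' := by
  unfold deltaMAux
  rw [map_add, TensorProduct.map_add_left]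
  simp only [LinearMap.add_comp]

lemma deltaMAux_smul_right (c : ℂ) (a₁ a₂ : H) :
    deltaMAux a₁ (c • a₂) = c • deltaMAux (H := H) a₁ a₂ := by
  unfold deltaMAux
  rw [map_smul, TensorProduct.map_smul_left]
  simp only [LinearMap.smul_comp]

/-- `deltaG (a₁ ⊗ a₂) = deltaMAux a₁ a₂`, assembled linearly. -/
def deltaG : H ⊗[ℂ] H →ₗ[ℂ]
    (H ⊗[ℂ] (H ⊗[ℂ] (H ⊗[ℂ] H)) →ₗ[ℂ] (H ⊗[ℂ] H) ⊗[ℂ] (H ⊗[ℂ] H)) :=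
  TensorProduct.lift <| LinearMap.mk₂ ℂ deltaMAux
    deltaMAux_add_left deltaMAux_smul_left deltaMAux_add_right deltaMAux_smul_right

/-- The coproduct of `M(H)`:
`ΔM (a ⊗ h) = Σ (a₍₂₎ ⊗ h₍₂₎) ⊗ ((a₍₁₎ * h₍₁₎ * S h₍₃₎) ⊗ h₍₄₎)`. -/
def ΔM : H ⊗[ℂ] H →ₗ[ℂ] (H ⊗[ℂ] H) ⊗[ℂ] (H ⊗[ℂ] H) :=
  TensorProduct.lift <| LinearMap.mk₂ ℂ
    (fun (a h : H) => (deltaG (Δ a)) (Δ3 h))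
    (fun a a' h => by (try dsimp only); rw [map_add, map_add, LinearMap.add_apply])
    (fun c a h => by (try dsimp only); rw [map_smul, map_smul, LinearMap.smul_apply])
    (fun a h h' => by (try dsimp only); rw [map_add, map_add])
    (fun c a h => by (try dsimp only); rw [map_smul, map_smul])

/-- The componentwise (tensor-square) product on `M(H) ⊗ M(H)`. -/
def tensorMul2 :
    ((H ⊗[ℂ] H) ⊗[ℂ] (H ⊗[ℂ] H)) →ₗ[ℂ] ((H ⊗[ℂ] H) ⊗[ℂ] (H ⊗[ℂ] H)) →ₗ[ℂ]
      ((H ⊗[ℂ] H) ⊗[ℂ] (H ⊗[ℂ] H)) :=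
  TensorProduct.lift <| LinearMap.mk₂ ℂ
    (fun (u v : H ⊗[ℂ] H) => TensorProduct.map (μM u) (μM v))
    (fun u u' v => by (try dsimp only); rw [map_add, TensorProduct.map_add_left])
    (fun c u v => by (try dsimp only); rw [map_smul, TensorProduct.map_smul_left])
    (fun u v v' => by (try dsimp only); rw [map_add, TensorProduct.map_add_right])
    (fun c u v => by (try dsimp only); rw [map_smul, TensorProduct.map_smul_right])

/-- The antipode candidate of `M(H)`:
`SM (a ⊗ h) = Σ (1 ⊗ S h₍₂₎) · (S (a * h₍₁₎ * S h₍₃₎) ⊗ 1)`,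
where `·` is the mirror product `μM`. -/
def SM : H ⊗[ℂ] H →ₗ[ℂ] H ⊗[ℂ] H :=
  TensorProduct.lift <| LinearMap.mk₂ ℂ
    (fun (a h : H) =>
      (TensorProduct.lift μM)
        ((TensorProduct.map
            ((TensorProduct.mk ℂ H H 1) ∘ₗ S)
            (((TensorProduct.mk ℂ H H).flip 1) ∘ₗ S ∘ₗ (LinearMap.mul' ℂ H) ∘ₗ
              (TensorProduct.map (LinearMap.mulLeft ℂ a) S)))
          ((TensorProduct.assoc ℂ H H H).toLinearMap
            ((TensorProduct.map (TensorProduct.comm ℂ H H).toLinearMap LinearMap.id)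
              ((TensorProduct.assoc ℂ H H H).symm.toLinearMap (Δ2 h))))))
    (fun a a' h => by
      try dsimp only
      rw [mulLeft_add, TensorProduct.map_add_left, LinearMap.comp_add, LinearMap.comp_add,
        LinearMap.comp_add, TensorProduct.map_add_right, LinearMap.add_apply, map_add])
    (fun c a h => by
      try dsimp only
      rw [mulLeft_smul, TensorProduct.map_smul_left, LinearMap.comp_smul, LinearMap.comp_smul,
        LinearMap.comp_smul, TensorProduct.map_smul_right, LinearMap.smul_apply, map_smul])
    (fun a h h' => by (try dsimp only); simp only [map_add])
    (fun c a h => by (try dsimp only); simp only [map_smul])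

/-- `ℓ ∈ H` is a normalized (two-sided) Haar integral:
`x ℓ = ε(x) ℓ = ℓ x` for all `x`, and `ε(ℓ) = 1`. -/
def IsHaarIntegral (ℓ : H) : Prop :=
  ε ℓ = 1 ∧ ∀ x : H, x * ℓ = ε x • ℓ ∧ ℓ * x = ε x • ℓ

/-- Fourfold tensor product of operators on `H*`, acting on the four edges
`ψ¹ ⊗ (ψ² ⊗ (ψ³ ⊗ ψ⁴))`. -/
def map4 (f₁ f₂ f₃ f₄ : Module.Dual ℂ H →ₗ[ℂ] Module.Dual ℂ H) :
    Module.Dual ℂ H ⊗[ℂ] (Module.Dual ℂ H ⊗[ℂ] (Module.Dual ℂ H ⊗[ℂ] Module.Dual ℂ H))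
      →ₗ[ℂ]
    Module.Dual ℂ H ⊗[ℂ] (Module.Dual ℂ H ⊗[ℂ] (Module.Dual ℂ H ⊗[ℂ] Module.Dual ℂ H)) :=
  TensorProduct.map f₁ (TensorProduct.map f₂ (TensorProduct.map f₃ f₄))


/-! ### Auxiliary machinery for Statement 10 -/

lemma antipode_one' : S (1 : H) = 1 := by
  have := HopfAlgebra.mul_antipode_rTensor_comul_apply (R := ℂ) (A := H) 1
  simpa [Algebra.TensorProduct.one_def] using this

section Convolution

variable {C : Type} [AddCommMonoid C] [Module ℂ C] [Coalgebra ℂ C]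

/-- Convolution product of linear maps from a coalgebra `C` to `H`. -/
def conv (f g : C →ₗ[ℂ] H) : C →ₗ[ℂ] H :=
  LinearMap.mul' ℂ H ∘ₗ TensorProduct.map f g ∘ₗ Coalgebra.comul

/-- Convolution unit. -/
def convUnit : C →ₗ[ℂ] H := Algebra.linearMap ℂ H ∘ₗ Coalgebra.counit

lemma conv_repr (f g : C →ₗ[ℂ] H) (t : C) (r : Coalgebra.Repr ℂ t (C × C)) :
    conv f g t = ∑ i ∈ r.index, f (r.left i) * g (r.right i) := by
  simp only [conv, LinearMap.comp_apply, ← r.eq, map_sum, TensorProduct.map_tmul,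
    LinearMap.mul'_apply]

lemma conv_assoc (f g k : C →ₗ[ℂ] H) : conv (conv f g) k = conv f (conv g k) := by
  apply LinearMap.ext; intro t
  let r := Coalgebra.Repr.arbitrary ℂ t
  let r₁ : ∀ i, Coalgebra.Repr ℂ (r.left i) (C × C) := fun i => Coalgebra.Repr.arbitrary ℂ _
  let r₂ : ∀ i, Coalgebra.Repr ℂ (r.right i) (C × C) := fun i => Coalgebra.Repr.arbitrary ℂ _
  calc conv (conv f g) k t
      = ∑ i ∈ r.index, conv f g (r.left i) * k (r.right i) := conv_repr _ _ _ r
    _ = ∑ i ∈ r.index, ∑ j ∈ (r₁ i).index,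
          f ((r₁ i).left j) * (g ((r₁ i).right j) * k (r.right i)) := by
        refine Finset.sum_congr rfl fun i _ => ?_
        rw [conv_repr _ _ _ (r₁ i), Finset.sum_mul]
        exact Finset.sum_congr rfl fun j _ => mul_assoc _ _ _
    _ = ∑ i ∈ r.index, ∑ j ∈ (r₂ i).index,
          f (r.left i) * (g ((r₂ i).left j) * k ((r₂ i).right j)) := by
        have h3 := Coalgebra.sum_tmul_tmul_eq r r₁ r₂
        have h4 := congrArg (LinearMap.mul' ℂ H ∘ₗ
          TensorProduct.map f (LinearMap.mul' ℂ H ∘ₗ TensorProduct.map g k)) h3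
        simpa [map_sum, LinearMap.mul'_apply] using h4
    _ = conv f (conv g k) t := by
        rw [conv_repr f (conv g k) t r]
        refine (Finset.sum_congr rfl fun i _ => ?_).symm
        rw [conv_repr _ _ _ (r₂ i), Finset.mul_sum]

lemma conv_unit_right (f : C →ₗ[ℂ] H) : conv f convUnit = f := by
  apply LinearMap.ext; intro t
  let r := Coalgebra.Repr.arbitrary ℂ t
  rw [conv_repr _ _ _ r]
  have h2 := congrArg (f ∘ₗ (TensorProduct.rid ℂ C).toLinearMap)
    (Coalgebra.sum_tmul_counit_eq r)
  simp only [map_sum, LinearMap.comp_apply, LinearEquiv.coe_coe, TensorProduct.rid_tmul,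
    map_smul, one_smul] at h2
  rw [← h2]
  refine Finset.sum_congr rfl fun i _ => ?_
  rw [show convUnit (r.right i) = algebraMap ℂ H (Coalgebra.counit (r.right i)) from rfl,
    ← Algebra.commutes, ← Algebra.smul_def]

lemma conv_unit_left (f : C →ₗ[ℂ] H) : conv convUnit f = f := by
  apply LinearMap.ext; intro t
  let r := Coalgebra.Repr.arbitrary ℂ t
  rw [conv_repr _ _ _ r]
  have h2 := congrArg (f ∘ₗ (TensorProduct.lid ℂ C).toLinearMap)
    (Coalgebra.sum_counit_tmul_eq r)
  simp only [map_sum, LinearMap.comp_apply, LinearEquiv.coe_coe, TensorProduct.lid_tmul,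
    map_smul, one_smul] at h2
  rw [← h2]
  refine Finset.sum_congr rfl fun i _ => ?_
  rw [show convUnit (r.left i) = algebraMap ℂ H (Coalgebra.counit (r.left i)) from rfl,
    ← Algebra.smul_def]

end Convolution

lemma comul_tmul' (u v : H) :
    Coalgebra.comul (R := ℂ) (u ⊗ₜ[ℂ] v) =
      TensorProduct.tensorTensorTensorComm ℂ H H H H
        (Coalgebra.comul (R := ℂ) u ⊗ₜ[ℂ] Coalgebra.comul (R := ℂ) v) := rfl

lemma counit_tmul' (u v : H) :
    Coalgebra.counit (R := ℂ) (u ⊗ₜ[ℂ] v) =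
      Coalgebra.counit (R := ℂ) u * Coalgebra.counit (R := ℂ) v := by
  rw [TensorProduct.counit_tmul, smul_eq_mul, mul_comm]

lemma comul_tmul_sum (u v : H) (ru : Coalgebra.Repr ℂ u (H × H)) (rv : Coalgebra.Repr ℂ v (H × H)) :
    Coalgebra.comul (R := ℂ) (u ⊗ₜ[ℂ] v) =
      ∑ i ∈ ru.index, ∑ j ∈ rv.index,
        (ru.left i ⊗ₜ[ℂ] rv.left j) ⊗ₜ[ℂ] (ru.right i ⊗ₜ[ℂ] rv.right j) := by
  rw [comul_tmul', ← ru.eq, ← rv.eq]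
  simp only [map_sum, TensorProduct.sum_tmul, TensorProduct.tmul_sum,
    TensorProduct.tensorTensorTensorComm_tmul]
  rw [Finset.sum_comm]

lemma conv_FM :
    conv (S ∘ₗ LinearMap.mul' ℂ H) (LinearMap.mul' ℂ H) = convUnit (C := H ⊗[ℂ] H) := by
  apply TensorProduct.ext'; intro u v
  let ru := Coalgebra.Repr.arbitrary ℂ u
  let rv := Coalgebra.Repr.arbitrary ℂ v
  have e1 : conv (S ∘ₗ LinearMap.mul' ℂ H) (LinearMap.mul' ℂ H) (u ⊗ₜ[ℂ] v) =
      ∑ i ∈ ru.index, ∑ j ∈ rv.index,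
        S (ru.left i * rv.left j) * (ru.right i * rv.right j) := by
    rw [show conv (S ∘ₗ LinearMap.mul' ℂ H) (LinearMap.mul' ℂ H) (u ⊗ₜ[ℂ] v) =
      LinearMap.mul' ℂ H (TensorProduct.map (S ∘ₗ LinearMap.mul' ℂ H) (LinearMap.mul' ℂ H)
        (Coalgebra.comul (u ⊗ₜ[ℂ] v))) from rfl, comul_tmul_sum u v ru rv]
    simp [LinearMap.mul'_apply]
  have key : ∑ i ∈ ru.index, ∑ j ∈ rv.index,
      (ru.left i * rv.left j) ⊗ₜ[ℂ] (ru.right i * rv.right j) =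
      Coalgebra.comul (R := ℂ) (u * v) := by
    rw [Bialgebra.comul_mul, ← ru.eq, ← rv.eq, Finset.sum_mul_sum]
    simp [Algebra.TensorProduct.tmul_mul_tmul]
  have h4 := congrArg (LinearMap.mul' ℂ H ∘ₗ LinearMap.rTensor H S) key
  simp only [map_sum, LinearMap.comp_apply, LinearMap.rTensor_tmul,
    LinearMap.mul'_apply] at h4
  rw [e1, h4, HopfAlgebra.mul_antipode_rTensor_comul_apply]
  rw [show convUnit (u ⊗ₜ[ℂ] v) =
    algebraMap ℂ H (Coalgebra.counit (R := ℂ) (u ⊗ₜ[ℂ] v)) from rfl, counit_tmul',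
    Bialgebra.counit_mul]

lemma conv_MG :
    conv (LinearMap.mul' ℂ H) (LinearMap.mul' ℂ H ∘ₗ TensorProduct.map S S ∘ₗ
      (TensorProduct.comm ℂ H H).toLinearMap) = convUnit (C := H ⊗[ℂ] H) := by
  apply TensorProduct.ext'; intro u v
  let ru := Coalgebra.Repr.arbitrary ℂ u
  let rv := Coalgebra.Repr.arbitrary ℂ v
  have e1 : conv (LinearMap.mul' ℂ H) (LinearMap.mul' ℂ H ∘ₗ TensorProduct.map S S ∘ₗ
      (TensorProduct.comm ℂ H H).toLinearMap) (u ⊗ₜ[ℂ] v) =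
      ∑ i ∈ ru.index, ∑ j ∈ rv.index,
        (ru.left i * rv.left j) * (S (rv.right j) * S (ru.right i)) := by
    rw [show conv (LinearMap.mul' ℂ H) (LinearMap.mul' ℂ H ∘ₗ TensorProduct.map S S ∘ₗ
      (TensorProduct.comm ℂ H H).toLinearMap) (u ⊗ₜ[ℂ] v) =
      LinearMap.mul' ℂ H (TensorProduct.map (LinearMap.mul' ℂ H)
        (LinearMap.mul' ℂ H ∘ₗ TensorProduct.map S S ∘ₗ (TensorProduct.comm ℂ H H).toLinearMap)
        (Coalgebra.comul (u ⊗ₜ[ℂ] v))) from rfl, comul_tmul_sum u v ru rv]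
    simp [LinearMap.mul'_apply]
  rw [e1]
  have e2 : ∀ i ∈ ru.index, ∑ j ∈ rv.index,
      (ru.left i * rv.left j) * (S (rv.right j) * S (ru.right i)) =
      ru.left i * (algebraMap ℂ H (Coalgebra.counit (R := ℂ) v) * S (ru.right i)) := by
    intro i _
    rw [← HopfAlgebra.sum_mul_antipode_eq_algebraMap_counit rv, Finset.sum_mul, Finset.mul_sum]
    exact Finset.sum_congr rfl fun j _ => by noncomm_ring
  rw [Finset.sum_congr rfl e2]
  have e3 : ∀ i, ru.left i * (algebraMap ℂ H (Coalgebra.counit (R := ℂ) v) * S (ru.right i)) =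
      Coalgebra.counit (R := ℂ) v • (ru.left i * S (ru.right i)) := by
    intro i
    rw [← Algebra.smul_def, mul_smul_comm]
  simp only [e3, ← Finset.smul_sum, HopfAlgebra.sum_mul_antipode_eq_algebraMap_counit ru]
  rw [show convUnit (u ⊗ₜ[ℂ] v) =
    algebraMap ℂ H (Coalgebra.counit (R := ℂ) (u ⊗ₜ[ℂ] v)) from rfl, counit_tmul']
  rw [map_mul, Algebra.smul_def]
  exact (Algebra.commutes _ _)

/-- The antipode is anti-multiplicative. -/
lemma antipode_mul' (u v : H) : S (u * v) = S v * S u := by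
  have hFG : (S ∘ₗ LinearMap.mul' ℂ H) = (LinearMap.mul' ℂ H ∘ₗ TensorProduct.map S S ∘ₗ
      (TensorProduct.comm ℂ H H).toLinearMap) := by
    calc S ∘ₗ LinearMap.mul' ℂ H
        = conv (S ∘ₗ LinearMap.mul' ℂ H) convUnit := (conv_unit_right _).symm
      _ = conv (S ∘ₗ LinearMap.mul' ℂ H) (conv (LinearMap.mul' ℂ H)
            (LinearMap.mul' ℂ H ∘ₗ TensorProduct.map S S ∘ₗ
              (TensorProduct.comm ℂ H H).toLinearMap)) := by rw [conv_MG]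
      _ = conv (conv (S ∘ₗ LinearMap.mul' ℂ H) (LinearMap.mul' ℂ H))
            (LinearMap.mul' ℂ H ∘ₗ TensorProduct.map S S ∘ₗ
              (TensorProduct.comm ℂ H H).toLinearMap) := (conv_assoc _ _ _).symm
      _ = conv convUnit (LinearMap.mul' ℂ H ∘ₗ TensorProduct.map S S ∘ₗ
            (TensorProduct.comm ℂ H H).toLinearMap) := by rw [conv_FM]
      _ = _ := conv_unit_left _
  simpa using congr($hFG (u ⊗ₜ[ℂ] v))

/-- `Phi (q ⊗ (u ⊗ v)) = (S q * u) ⊗ v`. -/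
def Phi : H ⊗[ℂ] (H ⊗[ℂ] H) →ₗ[ℂ] H ⊗[ℂ] H :=
  (LinearMap.rTensor H (LinearMap.mul' ℂ H ∘ₗ LinearMap.rTensor H S)) ∘ₗ
    (TensorProduct.assoc ℂ H H H).symm.toLinearMap

@[simp] lemma Phi_tmul (p u v : H) : Phi (p ⊗ₜ[ℂ] (u ⊗ₜ[ℂ] v)) = (S p * u) ⊗ₜ[ℂ] v := by
  simp [Phi, LinearMap.mul'_apply]

lemma keyPhi : Phi ∘ₗ (Δ2 (H := H)) = TensorProduct.mk ℂ H H 1 := by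
  apply LinearMap.ext; intro r
  rw [LinearMap.comp_apply, show Δ2 (H := H) r = LinearMap.lTensor H Δ (Δ r) from rfl]
  rw [show Phi (LinearMap.lTensor H Δ (Δ r)) =
    (LinearMap.rTensor H (LinearMap.mul' ℂ H ∘ₗ LinearMap.rTensor H S))
      ((TensorProduct.assoc ℂ H H H).symm (LinearMap.lTensor H Δ (Δ r))) from rfl]
  rw [Coalgebra.coassoc_symm_apply, ← LinearMap.comp_apply, ← LinearMap.rTensor_comp]
  have hax : (LinearMap.mul' ℂ H ∘ₗ LinearMap.rTensor H S) ∘ₗ (Δ (H := H)) =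
      Algebra.linearMap ℂ H ∘ₗ ε := by
    rw [LinearMap.comp_assoc]
    exact HopfAlgebra.mul_antipode_rTensor_comul
  rw [hax, LinearMap.rTensor_comp, LinearMap.comp_apply,
    show (LinearMap.rTensor H (ε (H := H))) (Δ r) = (1 : ℂ) ⊗ₜ[ℂ] r from
      Coalgebra.rTensor_counit_comul r]
  simp

/-- `Theta aa bb Y (p ⊗ (n ⊗ q)) = aa * (p * ((bb * n) * (Y * S q)))`. -/
def Theta (aa bb Y : H) : H ⊗[ℂ] (H ⊗[ℂ] H) →ₗ[ℂ] H :=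
  LinearMap.mulLeft ℂ aa ∘ₗ LinearMap.mul' ℂ H ∘ₗ
    TensorProduct.map LinearMap.id
      (LinearMap.mul' ℂ H ∘ₗ TensorProduct.map (LinearMap.mulLeft ℂ bb)
        (LinearMap.mulLeft ℂ Y ∘ₗ S))

@[simp] lemma Theta_tmul (aa bb Y p n q : H) :
    Theta aa bb Y (p ⊗ₜ[ℂ] (n ⊗ₜ[ℂ] q)) = aa * (p * ((bb * n) * (Y * S q))) := by
  simp [Theta, LinearMap.mul'_apply]

/-- The formula `φ ◁ (a⊗h) = ⟨a h₁, φ₁⟩ ⟨S(h₂), φ₃⟩ φ₂`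
(i.e. `(φ ◁ (a⊗h))(x) = Σ φ (a h₁ x S h₂)`) defines a right action of the mirror
bicrossproduct `M(H)` on `H*`: `φ ◁ (1⊗1) = φ` and, for every Sweedler representation
`Δ² h = Σ h₁ ⊗ h₂ ⊗ h₃`,
`(φ ◁ (a⊗h)) ◁ (b⊗g) = φ ◁ ((a⊗h)·(b⊗g)) = Σ φ ◁ (a(h₁ b S(h₂)) ⊗ h₃ g)`. -/
theorem statement10 [FiniteDimensional ℂ H] (hS : ∀ x : H, S (S x) = x) :
    (∀ φ : Module.Dual ℂ H, ract φ 1 1 = φ) ∧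
    ∀ (φ : Module.Dual ℂ H) (a h b g : H) (ι : Type) (s : Finset ι) (h1 h2 h3 : ι → H),
      (∑ i ∈ s, h1 i ⊗ₜ[ℂ] (h2 i ⊗ₜ[ℂ] h3 i)) = Δ2 h →
      ract (ract φ a h) b g =
        ∑ i ∈ s, ract φ (a * (h1 i * b * S (h2 i))) (h3 i * g) := by
  refine ⟨fun φ => ?_, fun φ a h b g ι s h1 h2 h3 hyp => ?_⟩
  · apply LinearMap.ext; intro x
    simp only [ract, LinearMap.dualMap_apply]
    rw [show Δ (1 : H) = (1 : H) ⊗ₜ[ℂ] (1 : H) from by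
      rw [show Δ (1 : H) = Coalgebra.comul (R := ℂ) (1 : H) from rfl, Bialgebra.comul_one]
      rfl]
    simp [antipode_one']
  · apply LinearMap.ext; intro x
    simp only [ract, LinearMap.dualMap_apply, LinearMap.coe_sum, Finset.sum_apply]
    rw [← map_sum φ]
    congr 1
    set Y := sandwich ((TensorProduct.map LinearMap.id S) (Δ g)) x with hY
    have e4 : sandwich ((TensorProduct.map (LinearMap.mulLeft ℂ b) S) (Δ g)) x = b * Y := by
      have hm : (sandwich (H := H)).flip x ∘ₗ TensorProduct.map (LinearMap.mulLeft ℂ b) S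
          = LinearMap.mulLeft ℂ b ∘ₗ ((sandwich (H := H)).flip x ∘ₗ
              TensorProduct.map LinearMap.id S) := by
        apply TensorProduct.ext'; intro u v
        simp [mul_assoc]
      simpa using congr($hm (Δ g))
    have master := congrArg (Theta a b Y ∘ₗ LinearMap.lTensor H Phi ∘ₗ
        LinearMap.lTensor H (LinearMap.lTensor H Δ)) hyp
    simp only [map_sum, LinearMap.comp_apply, LinearMap.lTensor_tmul] at master
    have e1 : (LinearMap.lTensor H Phi) ((LinearMap.lTensor H (LinearMap.lTensor H Δ)) (Δ2 h))
        = LinearMap.lTensor H (TensorProduct.mk ℂ H H 1) (Δ h) := by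
      rw [show Δ2 (H := H) h = LinearMap.lTensor H Δ (Δ h) from rfl,
        ← LinearMap.comp_apply, ← LinearMap.lTensor_comp, ← LinearMap.comp_apply,
        ← LinearMap.lTensor_comp,
        show (Phi (H := H) ∘ₗ LinearMap.lTensor H Δ) ∘ₗ Δ = Phi ∘ₗ (Δ2 (H := H)) from rfl,
        keyPhi]
    rw [e1] at master
    have e3 : Theta a b Y ((LinearMap.lTensor H (TensorProduct.mk ℂ H H 1)) (Δ h)) =
        sandwich ((TensorProduct.map (LinearMap.mulLeft ℂ a) S) (Δ h)) (b * Y) := by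
      have hmaps : Theta a b Y ∘ₗ LinearMap.lTensor H (TensorProduct.mk ℂ H H 1) =
          (sandwich (H := H)).flip (b * Y) ∘ₗ TensorProduct.map (LinearMap.mulLeft ℂ a) S := by
        apply TensorProduct.ext'; intro p q
        simp [mul_assoc]
      simpa using congr($hmaps (Δ h))
    have e2 : ∀ i ∈ s, Theta a b Y
          ((LinearMap.lTensor H Phi) (h1 i ⊗ₜ[ℂ] (h2 i ⊗ₜ[ℂ] Δ (h3 i)))) =
        sandwich ((TensorProduct.map (LinearMap.mulLeft ℂ (a * (h1 i * b * S (h2 i)))) S)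
          (Δ (h3 i * g))) x := by
      intro i _
      have hmaps : Theta a b Y ∘ₗ LinearMap.lTensor H Phi ∘ₗ
            (TensorProduct.mk ℂ H (H ⊗[ℂ] (H ⊗[ℂ] H)) (h1 i)) ∘ₗ
            (TensorProduct.mk ℂ H (H ⊗[ℂ] H) (h2 i)) =
          (sandwich (H := H)).flip x ∘ₗ
            TensorProduct.map (LinearMap.mulLeft ℂ (a * (h1 i * b * S (h2 i)))) S ∘ₗ
            LinearMap.mulRight ℂ (Δ g) := by
        apply TensorProduct.ext'; intro u v
        let rg := Coalgebra.Repr.arbitrary ℂ g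
        have hYs : Y = ∑ j ∈ rg.index, rg.left j * x * S (rg.right j) := by
          rw [hY, show Δ (H := H) g = Coalgebra.comul (R := ℂ) g from rfl, ← rg.eq]
          simp
        have hprod : (u ⊗ₜ[ℂ] v) * Δ g =
            ∑ j ∈ rg.index, (u * rg.left j) ⊗ₜ[ℂ] (v * rg.right j) := by
          rw [show Δ (H := H) g = Coalgebra.comul (R := ℂ) g from rfl, ← rg.eq,
            Finset.mul_sum]
          simp [Algebra.TensorProduct.tmul_mul_tmul]
        simp only [LinearMap.comp_apply, TensorProduct.mk_apply, LinearMap.lTensor_tmul,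
          Phi_tmul, Theta_tmul, LinearMap.mulRight_apply, hprod, map_sum,
          TensorProduct.map_tmul, LinearMap.flip_apply, LinearMap.mulLeft_apply,
          sandwich_tmul, hYs, antipode_mul']
        simp only [Finset.mul_sum, Finset.sum_mul]
        refine Finset.sum_congr rfl fun j _ => by noncomm_ring
      have hc : (LinearMap.mulRight ℂ (Δ g)) (Δ (h3 i)) = Δ (h3 i * g) := by
        rw [LinearMap.mulRight_apply,
          show Δ (h3 i * g) = Coalgebra.comul (R := ℂ) (h3 i * g) from rfl,
          Bialgebra.comul_mul]
      have := congr($hmaps (Δ (h3 i)))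
      simp only [LinearMap.comp_apply, TensorProduct.mk_apply, hc] at this
      exact this
    calc sandwich ((TensorProduct.map (LinearMap.mulLeft ℂ a) S) (Δ h))
          (sandwich ((TensorProduct.map (LinearMap.mulLeft ℂ b) S) (Δ g)) x)
        = sandwich ((TensorProduct.map (LinearMap.mulLeft ℂ a) S) (Δ h)) (b * Y) := by
          rw [e4]
      _ = Theta a b Y ((LinearMap.lTensor H (TensorProduct.mk ℂ H H 1)) (Δ h)) := e3.symm
      _ = ∑ i ∈ s, Theta a b Y
            ((LinearMap.lTensor H Phi) (h1 i ⊗ₜ[ℂ] (h2 i ⊗ₜ[ℂ] Δ (h3 i)))) := master.symm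
      _ = ∑ i ∈ s, sandwich ((TensorProduct.map
            (LinearMap.mulLeft ℂ (a * (h1 i * b * S (h2 i)))) S) (Δ (h3 i * g))) x :=
          Finset.sum_congr rfl e2

end SemidualKitaev
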